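/- Every invertible isotropic function σ̂: PSym(3) → Sym(3) is semi-invertible: there exist real-valued functions ψ₀, ψ₁, ψ₂ of the matrix invariants of B such that B = ψ₀(B) I + ψ₁(B) σ̂(B) + ψ₂(B) σ̂(B)² for all B ∈ PSym(3). -/

import Mathlib

open Matrix

/-- A matrix is orthogonal. -/
def IsOrthogonal {n : ℕ} (Q : Matrix (Fin n) (Fin n) ℝ) : Prop :=
  Q * Qᵀ = 1 ∧ Qᵀ * Q = 1

/-- PSym(3): positive-definite symmetric real 3×3 matrices. -/
def PSym3 : Set (Matrix (Fin 3) (Fin 3) ℝ) := {B | B.IsSymm ∧ B.PosDef}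

/-- σ̂ is semi-invertible: B = ψ₀ I + ψ₁ σ̂(B) + ψ₂ σ̂(B)² with coefficients ψᵢ
depending only on the matrix invariants of B (i.e. invariant under
B ↦ Qᵀ B Q). -/
def SemiInvertible (σ : Matrix (Fin 3) (Fin 3) ℝ → Matrix (Fin 3) (Fin 3) ℝ) : Prop :=
  ∃ ψ : Fin 3 → (Matrix (Fin 3) (Fin 3) ℝ → ℝ),
    (∀ k : Fin 3, ∀ B ∈ PSym3, ∀ Q : Matrix (Fin 3) (Fin 3) ℝ, IsOrthogonal Q →
      ψ k (Qᵀ * B * Q) = ψ k B) ∧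
    ∀ B ∈ PSym3, B = ψ 0 B • 1 + ψ 1 B • σ B + ψ 2 B • (σ B) ^ 2

/-! Diagonalise `B = U diag(b) Uᵀ`. Isotropy and injectivity of `σ` together say that an
orthogonal `Q` fixes `B` under conjugation iff it fixes `σ B`. Applied to the coordinate
reflections this makes `σ (diag b) = diag e` diagonal; applied to the transposition matrices it
shows that `e i = e j` forces `b i = b j`, so `b` is a function of `e`, and Lagrange interpolation
gives a quadratic `p` with `diag b = p (diag e)`, hence `B = p (σ B)`. Choosing `p` on a fixed
representative of the orthogonal conjugacy class of `B` makes its coefficients invariant. -/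

open Polynomial

theorem Function.FactorsThrough.exists_polynomial_eval_eq {ι K : Type*} [Fintype ι] [Field K]
    {e b : ι → K} (h : b.FactorsThrough e) :
    ∃ p : K[X], p.degree < Fintype.card ι ∧ ∀ i, p.eval (e i) = b i := by
  classical
  refine ⟨Lagrange.interpolate (Finset.univ.image e) id (Function.extend e b 0), ?_, fun i => ?_⟩
  · calc _ < ((Finset.univ.image e).card : WithBot ℕ) :=
          Lagrange.degree_interpolate_lt _ (Set.injOn_id _)
      _ ≤ Fintype.card ι := by exact_mod_cast Finset.card_image_le
  · rw [← id_eq (e i), Lagrange.eval_interpolate_at_node _ (Set.injOn_id _)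
      (Finset.mem_image_of_mem e (Finset.mem_univ i)), h.extend_apply]

theorem Polynomial.aeval_eq_of_degree_lt_three {R A : Type*} [CommSemiring R] [Semiring A]
    [Algebra R A] {p : R[X]} (hp : p.degree < 3) (x : A) :
    aeval x p = p.coeff 0 • 1 + p.coeff 1 • x + p.coeff 2 • x ^ 2 := by
  have hp' : p.natDegree < 3 := by
    rcases eq_or_ne p 0 with rfl | hp0
    · simp
    · exact (natDegree_lt_iff_degree_lt hp0).2 hp
  simp [aeval_eq_sum_range' hp', Finset.sum_range_succ]

theorem Matrix.aeval_diagonal {n R : Type*} [Fintype n] [DecidableEq n] [CommSemiring R]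
    (e : n → R) (p : R[X]) : aeval (diagonal e) p = diagonal fun i => p.eval (e i) := by
  rw [← diagonalAlgHom_apply (R := R), aeval_algHom_apply]
  simp [aeval_pi]

theorem Setoid.exists_choice_of_rel_invariant {α β : Type*} (s : Setoid α) {P : α → β → Prop}
    (hex : ∀ a, ∃ b, P a b) (hP : ∀ ⦃a a' b⦄, s a a' → P a b → P a' b) :
    ∃ f : α → β, (∀ ⦃a a'⦄, s a a' → f a = f a') ∧ ∀ a, P a (f a) :=
  ⟨fun a => (hex (⟦a⟧ : Quotient s).out).choose, fun _ _ h => by dsimp only; rw [Quotient.sound h],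
    fun a => hP (Quotient.mk_out a) (hex _).choose_spec⟩

section Orthogonal

variable {n : ℕ} {Q R M N : Matrix (Fin n) (Fin n) ℝ}

theorem isOrthogonal_iff_mem_orthogonalGroup :
    IsOrthogonal Q ↔ Q ∈ orthogonalGroup (Fin n) ℝ :=
  ⟨fun h => (mem_orthogonalGroup_iff _ _).2 h.1,
    fun h => ⟨(mem_orthogonalGroup_iff _ _).1 h, (mem_orthogonalGroup_iff' _ _).1 h⟩⟩

theorem isOrthogonal_one : IsOrthogonal (1 : Matrix (Fin n) (Fin n) ℝ) := by
  simp [IsOrthogonal]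

theorem IsOrthogonal.transpose (hQ : IsOrthogonal Q) : IsOrthogonal Qᵀ := by
  simpa [IsOrthogonal, and_comm] using hQ

theorem IsOrthogonal.mul (hQ : IsOrthogonal Q) (hR : IsOrthogonal R) : IsOrthogonal (Q * R) :=
  isOrthogonal_iff_mem_orthogonalGroup.2 <|
    mul_mem (isOrthogonal_iff_mem_orthogonalGroup.1 hQ) (isOrthogonal_iff_mem_orthogonalGroup.1 hR)

theorem IsOrthogonal.mul_conj_mul_transpose (hQ : IsOrthogonal Q) (M : Matrix (Fin n) (Fin n) ℝ) :
    Q * (Qᵀ * M * Q) * Qᵀ = M := by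
  simp only [← Matrix.mul_assoc, hQ.1, Matrix.one_mul]
  rw [Matrix.mul_assoc, hQ.1, Matrix.mul_one]

theorem IsOrthogonal.conj_inj (hQ : IsOrthogonal Q) : Qᵀ * M * Q = Qᵀ * N * Q ↔ M = N :=
  ⟨fun h => by rw [← hQ.mul_conj_mul_transpose M, h, hQ.mul_conj_mul_transpose], fun h => h ▸ rfl⟩

theorem IsOrthogonal.aeval_conj (hQ : IsOrthogonal Q) (M : Matrix (Fin n) (Fin n) ℝ) (p : ℝ[X]) :
    aeval (Qᵀ * M * Q) p = Qᵀ * aeval M p * Q := by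
  let u : unitary (Matrix (Fin n) (Fin n) ℝ) := ⟨Q, isOrthogonal_iff_mem_orthogonalGroup.1 hQ⟩
  have := aeval_algHom_apply (Unitary.conjStarAlgAut ℝ _ (star u)) M p
  simpa [u, star_eq_conjTranspose] using this

end Orthogonal

theorem mem_PSym3_iff_posDef {B : Matrix (Fin 3) (Fin 3) ℝ} : B ∈ PSym3 ↔ B.PosDef :=
  ⟨And.right, fun hB => ⟨isHermitian_iff_isSymm.1 hB.1, hB⟩⟩

theorem IsOrthogonal.conj_mem_PSym3_iff {Q B : Matrix (Fin 3) (Fin 3) ℝ} (hQ : IsOrthogonal Q) :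
    Qᵀ * B * Q ∈ PSym3 ↔ B ∈ PSym3 := by
  have hQ' : IsUnit Q := Unitary.isUnit_coe (U := ⟨Q, isOrthogonal_iff_mem_orthogonalGroup.1 hQ⟩)
  simpa [mem_PSym3_iff_posDef, star_eq_conjTranspose] using
    IsUnit.posDef_star_left_conjugate_iff (x := B) hQ'

def orthogonalConj (n : ℕ) : Setoid (Matrix (Fin n) (Fin n) ℝ) where
  r A B := ∃ Q, IsOrthogonal Q ∧ B = Qᵀ * A * Q
  iseqv :=
    { refl _ := ⟨1, isOrthogonal_one, by simp⟩
      symm := by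
        rintro A _ ⟨Q, hQ, rfl⟩
        exact ⟨Qᵀ, hQ.transpose, by rw [transpose_transpose, hQ.mul_conj_mul_transpose]⟩
      trans := by
        rintro A _ _ ⟨Q, hQ, rfl⟩ ⟨R, hR, rfl⟩
        exact ⟨Q * R, hQ.mul hR, by simp [Matrix.mul_assoc]⟩ }

section DiagonalStabilizer

variable {n : ℕ}

def coordReflection (i : Fin n) : Matrix (Fin n) (Fin n) ℝ :=
  diagonal (Function.update 1 i (-1))

theorem coordReflection_mul_self (i : Fin n) : coordReflection i * coordReflection i = 1 := by
  rw [coordReflection, diagonal_mul_diagonal, ← diagonal_one]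
  congr 1
  ext k
  rcases eq_or_ne k i with rfl | hk <;> simp [*]

theorem isOrthogonal_coordReflection (i : Fin n) : IsOrthogonal (coordReflection i) := by
  simp [IsOrthogonal, coordReflection, ← coordReflection_mul_self i]

theorem coordReflection_conj_diagonal (i : Fin n) (b : Fin n → ℝ) :
    (coordReflection i)ᵀ * diagonal b * coordReflection i = diagonal b := by
  rw [coordReflection, diagonal_transpose, diagonal_mul_diagonal, diagonal_mul_diagonal]
  congr 1
  ext k
  rcases eq_or_ne k i with rfl | hk <;> simp [*]

theorem eq_diagonal_of_forall_coordReflection_conj {M : Matrix (Fin n) (Fin n) ℝ}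
    (hM : ∀ i, (coordReflection i)ᵀ * M * coordReflection i = M) :
    M = diagonal fun i => M i i := by
  ext i j
  rcases eq_or_ne i j with rfl | hij
  · simp
  · have hflip : -M i j = M i j := by
      simpa [coordReflection, mul_diagonal, diagonal_mul, hij.symm] using
        congr_fun (congr_fun (hM i) i) j
    rw [diagonal_apply_ne _ hij]
    linarith

theorem isOrthogonal_permMatrix (π : Equiv.Perm (Fin n)) : IsOrthogonal (π.permMatrix ℝ) := by
  simp [IsOrthogonal, ← permMatrix_mul]

theorem permMatrix_conj_diagonal (π : Equiv.Perm (Fin n)) (v : Fin n → ℝ) :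
    (π.permMatrix ℝ)ᵀ * diagonal v * π.permMatrix ℝ = diagonal (v ∘ π.symm) := by
  rw [transpose_permMatrix, Equiv.Perm.permMatrix, Equiv.Perm.permMatrix,
    PEquiv.toMatrix_toPEquiv_mul, PEquiv.mul_toMatrix_toPEquiv, submatrix_submatrix]
  exact submatrix_diagonal_equiv v π.symm

theorem exists_diagonal_eq_aeval_of_conj_eq_self_iff {b : Fin n → ℝ}
    {S : Matrix (Fin n) (Fin n) ℝ}
    (h : ∀ Q, IsOrthogonal Q → (Qᵀ * diagonal b * Q = diagonal b ↔ Qᵀ * S * Q = S)) :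
    ∃ p : ℝ[X], p.degree < n ∧ diagonal b = aeval S p := by
  set e : Fin n → ℝ := fun i => S i i
  have hS : S = diagonal e := eq_diagonal_of_forall_coordReflection_conj fun i =>
    (h _ (isOrthogonal_coordReflection i)).1 (coordReflection_conj_diagonal i b)
  have hbe : b.FactorsThrough e := by
    intro i j hij
    have he : e ∘ Equiv.swap i j = e := by
      rw [Equiv.comp_swap_eq_update, hij, Function.update_eq_self, ← hij, Function.update_eq_self]
    have hb := (h _ (isOrthogonal_permMatrix (Equiv.swap i j))).2
      (by rw [hS, permMatrix_conj_diagonal, Equiv.symm_swap, he])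
    rw [permMatrix_conj_diagonal, Equiv.symm_swap] at hb
    simpa using (congr_fun (congr_fun hb i) i).symm
  obtain ⟨p, hdeg, hp⟩ := hbe.exists_polynomial_eval_eq
  refine ⟨p, by simpa using hdeg, ?_⟩
  rw [hS, aeval_diagonal]
  simp [hp]

end DiagonalStabilizer

theorem Matrix.IsHermitian.exists_isOrthogonal_conj_eq_diagonal {n : ℕ}
    {B : Matrix (Fin n) (Fin n) ℝ} (hB : B.IsHermitian) :
    ∃ (U : Matrix (Fin n) (Fin n) ℝ) (b : Fin n → ℝ), IsOrthogonal U ∧ Uᵀ * B * U = diagonal b := by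
  set U : Matrix (Fin n) (Fin n) ℝ := (hB.eigenvectorUnitary : Matrix (Fin n) (Fin n) ℝ)
  have hU : IsOrthogonal U := isOrthogonal_iff_mem_orthogonalGroup.2 hB.eigenvectorUnitary.2
  refine ⟨U, hB.eigenvalues, hU, ?_⟩
  conv_lhs => rw [hB.spectral_theorem]
  simpa [star_eq_conjTranspose] using hU.transpose.mul_conj_mul_transpose (diagonal hB.eigenvalues)

section IsotropicFunction

variable {σ : Matrix (Fin 3) (Fin 3) ℝ → Matrix (Fin 3) (Fin 3) ℝ}

def IsIsotropic (σ : Matrix (Fin 3) (Fin 3) ℝ → Matrix (Fin 3) (Fin 3) ℝ) : Prop :=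
  ∀ B ∈ PSym3, ∀ Q : Matrix (Fin 3) (Fin 3) ℝ, IsOrthogonal Q → σ (Qᵀ * B * Q) = Qᵀ * σ B * Q

theorem IsIsotropic.conj_eq_self_iff (hσ : IsIsotropic σ) (hinj : Set.InjOn σ PSym3)
    {B Q : Matrix (Fin 3) (Fin 3) ℝ} (hB : B ∈ PSym3) (hQ : IsOrthogonal Q) :
    Qᵀ * B * Q = B ↔ Qᵀ * σ B * Q = σ B := by
  rw [← hσ B hB Q hQ]
  exact ⟨fun h => by rw [h], fun h => hinj (hQ.conj_mem_PSym3_iff.2 hB) hB h⟩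

theorem IsIsotropic.exists_eq_aeval (hσ : IsIsotropic σ) (hinj : Set.InjOn σ PSym3)
    {B : Matrix (Fin 3) (Fin 3) ℝ} (hB : B ∈ PSym3) :
    ∃ p : ℝ[X], p.degree < 3 ∧ B = aeval (σ B) p := by
  obtain ⟨U, b, hU, hUB⟩ := hB.2.1.exists_isOrthogonal_conj_eq_diagonal
  have hD : diagonal b ∈ PSym3 := hUB ▸ hU.conj_mem_PSym3_iff.2 hB
  obtain ⟨p, hdeg, hp⟩ := exists_diagonal_eq_aeval_of_conj_eq_self_iff fun Q hQ =>
    hσ.conj_eq_self_iff hinj hD hQ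
  refine ⟨p, hdeg, ?_⟩
  rwa [← hU.conj_inj, ← hU.aeval_conj, ← hσ B hB U hU, hUB]

theorem IsIsotropic.conj_eq_aeval (hσ : IsIsotropic σ) {B Q : Matrix (Fin 3) (Fin 3) ℝ} {p : ℝ[X]}
    (hB : B ∈ PSym3) (hQ : IsOrthogonal Q) (h : B = aeval (σ B) p) :
    Qᵀ * B * Q = aeval (σ (Qᵀ * B * Q)) p := by
  rw [hσ B hB Q hQ, hQ.aeval_conj, ← h]

end IsotropicFunction

theorem invertible_isotropic_implies_semiInvertible_general
    (σ : Matrix (Fin 3) (Fin 3) ℝ → Matrix (Fin 3) (Fin 3) ℝ)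
    (hσiso : ∀ B ∈ PSym3, ∀ Q : Matrix (Fin 3) (Fin 3) ℝ, IsOrthogonal Q →
      σ (Qᵀ * B * Q) = Qᵀ * σ B * Q)
    (hinj : ∀ B₁ ∈ PSym3, ∀ B₂ ∈ PSym3, σ B₁ = σ B₂ → B₁ = B₂) :
    SemiInvertible σ := by
  obtain ⟨f, hf_rel, hf⟩ := (orthogonalConj 3).exists_choice_of_rel_invariant
    (P := fun B p => B ∈ PSym3 → p.degree < 3 ∧ B = aeval (σ B) p)
    (fun B => (em (B ∈ PSym3)).elim
      (fun hB => (IsIsotropic.exists_eq_aeval hσiso hinj hB).imp fun _ hp _ => hp)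
      (fun hB => ⟨0, (absurd · hB)⟩))
    (by
      rintro B _ p ⟨Q, hQ, rfl⟩ hp hB'
      have hB := hQ.conj_mem_PSym3_iff.1 hB'
      exact ⟨(hp hB).1, IsIsotropic.conj_eq_aeval hσiso hB hQ (hp hB).2⟩)
  refine ⟨fun k B => (f B).coeff k, fun k B _ Q hQ => ?_, fun B hB => ?_⟩
  · exact congr_arg (coeff · k) (hf_rel ⟨Q, hQ, rfl⟩).symm
  · obtain ⟨hdeg, hB'⟩ := hf B hB
    exact hB'.trans (aeval_eq_of_degree_lt_three hdeg _)

/-- Every invertible isotropic function σ̂ : PSym(3) → Sym(3)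
is semi-invertible. -/
theorem invertible_isotropic_implies_semiInvertible
    (σ : Matrix (Fin 3) (Fin 3) ℝ → Matrix (Fin 3) (Fin 3) ℝ)
    (hσsym : ∀ B ∈ PSym3, (σ B).IsSymm)
    (hσiso : ∀ B ∈ PSym3, ∀ Q : Matrix (Fin 3) (Fin 3) ℝ, IsOrthogonal Q →
      σ (Qᵀ * B * Q) = Qᵀ * σ B * Q)
    (hinj : ∀ B₁ ∈ PSym3, ∀ B₂ ∈ PSym3, σ B₁ = σ B₂ → B₁ = B₂)
    (hsurj : ∀ Y : Matrix (Fin 3) (Fin 3) ℝ, Y.IsSymm → ∃ B ∈ PSym3, σ B = Y) :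
    SemiInvertible σ :=
  invertible_isotropic_implies_semiInvertible_general σ hσiso hinj
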